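/- Let D be a finite DAG with vertex set partitioned into sources S, internal vertices I, and sinks T, let X ⊆ I, and let i, j be vertices not in X. Then (i,j) is an edge of D_X (the graph obtained by eliminating all vertices of X in some order) if and only if D contains a directed path from i to j all of whose internal (intermediate) vertices lie in X. -/

import Mathlib

/-! Eliminating a vertex `v` turns paths through `insert v X` into paths through `X`: every new
edge `(a, b)` stands for the path `a → v → b`, and conversely a path is shortened by deleting its
visits to `v`, each maximal run `a → v → ⋯ → v → b` collapsing to the new edge `(a, b)`.
Induction on the elimination sequence then gives the claim. -/

variable {V : Type*} [DecidableEq V] [Fintype V]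

/-- In-neighborhood of `v` in the edge set `E`. -/
def inN (E : Finset (V × V)) (v : V) : Finset V :=
  (E.filter fun p => p.2 = v).image Prod.fst

/-- Out-neighborhood of `v` in the edge set `E`. -/
def outN (E : Finset (V × V)) (v : V) : Finset V :=
  (E.filter fun p => p.1 = v).image Prod.snd

/-- Elimination of vertex `v`: delete `v` and add an edge from every in-neighbor
to every out-neighbor of `v` (if not already present). -/
def elimv (E : Finset (V × V)) (v : V) : Finset (V × V) :=
  (E ∪ (inN E v) ×ˢ (outN E v)).filter fun p => p.1 ≠ v ∧ p.2 ≠ v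

/-- Eliminate a sequence of vertices, in order. -/
def elimSeq (E : Finset (V × V)) (σ : List V) : Finset (V × V) :=
  σ.foldl elimv E

/-- Markowitz degree of `v`: in-degree times out-degree. -/
def mark (E : Finset (V × V)) (v : V) : ℕ :=
  (inN E v).card * (outN E v).card

/-- Cost of an elimination sequence: sum of the Markowitz degrees at the
time of each elimination. -/
def cost (E : Finset (V × V)) : List V → ℕ
  | [] => 0
  | v :: σ => mark E v + cost (elimv E v) σ

/-- The directed graph with edge set `E` is acyclic. -/
def Acyclic (E : Finset (V × V)) : Prop :=
  ∀ v : V, ¬ Relation.TransGen (fun a b => (a, b) ∈ E) v v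

/-- `E` is an acyclic digraph whose vertices are partitioned into sources `S`
(no in-edges), internal vertices `I`, and sinks `T` (no out-edges). -/
def IsDAGPartition (E : Finset (V × V)) (S I T : Finset V) : Prop :=
  Acyclic E ∧ Disjoint S I ∧ Disjoint S T ∧ Disjoint I T ∧
    S ∪ I ∪ T = Finset.univ ∧ (∀ s ∈ S, inN E s = ∅) ∧ (∀ t ∈ T, outN E t = ∅)

/-- There is a directed path from `i` to `j` all of whose internal vertices
lie in `X` (the single-edge path has no internal vertices). -/
def PathThrough (E : Finset (V × V)) (X : Finset V) (i j : V) : Prop :=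
  ∃ l : List V, (∀ v ∈ l, v ∈ X) ∧ List.Chain' (fun a b => (a, b) ∈ E) (i :: (l ++ [j]))

section PathThrough

omit [DecidableEq V] [Fintype V]

variable {E : Finset (V × V)} {X : Finset V} {a i j : V}

theorem PathThrough.of_mem (h : (i, j) ∈ E) : PathThrough E X i j :=
  ⟨[], by simp, List.isChain_pair.2 h⟩

theorem PathThrough.cons (hia : (i, a) ∈ E) (ha : a ∈ X) (h : PathThrough E X a j) :
    PathThrough E X i j := by
  obtain ⟨l, hl, hchain⟩ := h
  exact ⟨a :: l, List.forall_mem_cons.2 ⟨ha, hl⟩, hchain.cons_cons hia⟩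

@[elab_as_elim]
theorem PathThrough.head_induction_on {P : V → Prop} (h : PathThrough E X i j)
    (edge : ∀ a, (a, j) ∈ E → P a)
    (cons : ∀ a b, (a, b) ∈ E → b ∈ X → PathThrough E X b j → P b → P a) : P i := by
  obtain ⟨l, hl, hchain⟩ := h
  induction l generalizing i with
  | nil => exact edge i (List.isChain_pair.1 hchain)
  | cons b l ih =>
    obtain ⟨hib, hchain⟩ := List.isChain_cons_cons.1 hchain
    obtain ⟨hb, hl⟩ := List.forall_mem_cons.1 hl
    exact cons i b hib hb ⟨l, hl, hchain⟩ (ih hl hchain)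

theorem pathThrough_empty_iff : PathThrough E ∅ i j ↔ (i, j) ∈ E :=
  ⟨fun h => h.head_induction_on (fun _ => id) fun _ _ _ hb => absurd hb (Finset.notMem_empty _),
    PathThrough.of_mem⟩

end PathThrough

section Elimination

omit [Fintype V]

variable {E : Finset (V × V)} {X : Finset V} {v a b i j : V}

@[simp]
theorem mem_inN : a ∈ inN E v ↔ (a, v) ∈ E := by
  simp [inN]

@[simp]
theorem mem_outN : b ∈ outN E v ↔ (v, b) ∈ E := by
  simp [outN]

theorem mem_elimv :
    (a, b) ∈ elimv E v ↔ (a ≠ v ∧ b ≠ v) ∧ ((a, b) ∈ E ∨ (a, v) ∈ E ∧ (v, b) ∈ E) := by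
  simp [elimv, and_comm]

theorem PathThrough.insert_of_elimv (h : PathThrough (elimv E v) X i j) :
    PathThrough E (insert v X) i j := by
  refine h.head_induction_on (fun a haj => ?_) fun a b hab hb _ ih => ?_
  · rcases (mem_elimv.1 haj).2 with haj | ⟨hav, hvj⟩
    · exact .of_mem haj
    · exact (PathThrough.of_mem hvj).cons hav (Finset.mem_insert_self v X)
  · have hb' : b ∈ insert v X := Finset.mem_insert_of_mem hb
    rcases (mem_elimv.1 hab).2 with hab | ⟨hav, hvb⟩
    · exact ih.cons hab hb'
    · exact (ih.cons hvb hb').cons hav (Finset.mem_insert_self v X)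

theorem PathThrough.elimv_of_insert (hi : i ≠ v) (hj : j ≠ v)
    (h : PathThrough E (insert v X) i j) : PathThrough (elimv E v) X i j := by
  have shortcut : ∀ {p a c}, p ≠ v → c ≠ v → (p = a ∨ (p, v) ∈ E ∧ a = v) → (a, c) ∈ E →
      (p, c) ∈ elimv E v := by
    rintro p a c hp hc (rfl | ⟨hpv, rfl⟩) hac
    · exact mem_elimv.2 ⟨⟨hp, hc⟩, .inl hac⟩
    · exact mem_elimv.2 ⟨⟨hp, hc⟩, .inr ⟨hpv, hac⟩⟩
  -- `p` is the last vertex other than `v` on the path up to and including `i`.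
  suffices ∀ p, p ≠ v → (p = i ∨ (p, v) ∈ E ∧ i = v) → PathThrough (elimv E v) X p j from
    this i hi (.inl rfl)
  refine h.head_induction_on (fun a haj p hp hpa => .of_mem (shortcut hp hj hpa haj))
    fun a b hab hb _ ih p hp hpa => ?_
  by_cases hbv : b = v
  · subst hbv
    refine ih p hp (.inr ⟨?_, rfl⟩)
    rcases hpa with rfl | ⟨hpv, -⟩
    exacts [hab, hpv]
  · exact (ih b hbv (.inl rfl)).cons (shortcut hp hbv hpa hab)
      ((Finset.mem_insert.1 hb).resolve_left hbv)

theorem pathThrough_elimv_iff (hi : i ≠ v) (hj : j ≠ v) :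
    PathThrough (elimv E v) X i j ↔ PathThrough E (insert v X) i j :=
  ⟨PathThrough.insert_of_elimv, PathThrough.elimv_of_insert hi hj⟩

theorem mem_elimSeq_iff_pathThrough (σ : List V) (hi : i ∉ σ) (hj : j ∉ σ) :
    (i, j) ∈ elimSeq E σ ↔ PathThrough E σ.toFinset i j := by
  induction σ generalizing E with
  | nil => exact pathThrough_empty_iff.symm
  | cons v σ ih =>
    rw [List.mem_cons, not_or] at hi hj
    rw [List.toFinset_cons, ← pathThrough_elimv_iff hi.1 hj.1]
    exact ih hi.2 hj.2

end Elimination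

theorem elimSeq_edge_iff_path_general (E : Finset (V × V)) (X : Finset V) (i j : V) (hi : i ∉ X)
    (hj : j ∉ X) (σ : List V) (hσX : σ.toFinset = X) :
    (i, j) ∈ elimSeq E σ ↔ PathThrough E X i j := by
  subst hσX
  exact mem_elimSeq_iff_pathThrough σ (mt List.mem_toFinset.2 hi) (mt List.mem_toFinset.2 hj)

/-- for `i, j ∉ X`, `(i,j)` is an edge of `D_X` iff `D` has a
directed path from `i` to `j` all of whose internal vertices lie in `X`. -/
theorem elimSeq_edge_iff_path (E : Finset (V × V)) (S I T : Finset V)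
    (hD : IsDAGPartition E S I T) (X : Finset V) (hX : X ⊆ I)
    (i j : V) (hi : i ∉ X) (hj : j ∉ X)
    (σ : List V) (hσ : σ.Nodup) (hσX : σ.toFinset = X) :
    (i, j) ∈ elimSeq E σ ↔ PathThrough E X i j :=
  elimSeq_edge_iff_path_general E X i j hi hj σ hσX
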